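/- Let Δ be a root system with positive system Δ⁺, Weyl group W, and ρ the half sum of positive roots. Suppose λ is dominant with respect to Δ⁺ and w ∈ W satisfies ‖λ − ρ‖ = ‖λ − wρ‖. Then (λ, γ) = 0 for every γ ∈ D_w = {γ ∈ −Δ⁺ : γ ∈ wΔ⁺}; in particular λ is dominant with respect to wΔ⁺. -/

import Mathlib

open scoped RealInnerProductSpace

variable {V : Type*} [NormedAddCommGroup V] [InnerProductSpace ℝ V] [FiniteDimensional ℝ V]

/-- Reflection in the hyperplane orthogonal to `α`. -/
noncomputable def rootReflection (α : V) : V ≃ₗᵢ[ℝ] V :=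
  Submodule.reflection (Submodule.span ℝ {α})ᗮ

/-- `Δ` is a (reduced, crystallographic) root system in `V`. -/
structure IsRootSystem (Δ : Finset V) : Prop where
  nonzero : (0 : V) ∉ Δ
  neg_mem : ∀ α ∈ Δ, -α ∈ Δ
  reflect_mem : ∀ α ∈ Δ, ∀ β ∈ Δ, rootReflection α β ∈ Δ
  crystallographic : ∀ α ∈ Δ, ∀ β ∈ Δ, ∃ n : ℤ, 2 * ⟪β, α⟫ / ⟪α, α⟫ = (n : ℝ)
  reduced : ∀ α ∈ Δ, ∀ t : ℝ, t • α ∈ Δ → t = 1 ∨ t = -1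

/-- The Weyl group: the subgroup of linear isometries generated by root reflections. -/
def weylGroup (Δ : Finset V) : Subgroup (V ≃ₗᵢ[ℝ] V) :=
  Subgroup.closure { g | ∃ α ∈ Δ, g = rootReflection α }

/-- `P` is a positive system for the root system `Δ`. -/
structure IsPositiveSystem (Δ P : Finset V) : Prop where
  subset : P ⊆ Δ
  mem_or_neg_mem : ∀ α ∈ Δ, α ∈ P ∨ -α ∈ P
  not_neg_mem : ∀ α ∈ P, -α ∉ P

/-- Half sum of the elements of `P`. -/
noncomputable def halfSum (P : Finset V) : V := (2:ℝ)⁻¹ • ∑ α ∈ P, α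

/-- `λ` is dominant with respect to the set of positive roots `P`. -/
def IsDominant (l : V) (P : Finset V) : Prop := ∀ α ∈ P, 0 ≤ ⟪l, α⟫

/- A Weyl group element `w` permutes `Δ`, so `wΔ⁺` is again a positive system, with half sum
`wρ`, and `ρ - wρ` is the sum of the roots in `Δ⁺ \ wΔ⁺`. Since `w` is an isometry,
`‖λ - ρ‖ = ‖λ - wρ‖` says exactly that `(λ, ρ - wρ) = 0`. For `λ` dominant this is a sum of
nonnegative terms, so `λ` is orthogonal to every root of `Δ⁺ \ wΔ⁺ = -D_w`. -/

section

omit [FiniteDimensional ℝ V]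

section

omit [InnerProductSpace ℝ V]

namespace IsPositiveSystem

variable {Δ P Q : Finset V}

lemma image {F : Type*} [EquivLike F V V] [AddEquivClass F V V] [DecidableEq V]
    (hP : IsPositiveSystem Δ P) {f : F} (hf : ∀ β, f β ∈ Δ ↔ β ∈ Δ) :
    IsPositiveSystem Δ (P.image f) where
  subset := by
    rintro _ hα
    obtain ⟨β, hβ, rfl⟩ := Finset.mem_image.mp hα
    exact (hf β).mpr (hP.subset hβ)
  mem_or_neg_mem := by
    intro α hα
    obtain ⟨β, rfl⟩ := EquivLike.surjective f α
    rcases hP.mem_or_neg_mem β ((hf β).mp hα) with h | h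
    · exact .inl (Finset.mem_image_of_mem f h)
    · exact .inr (map_neg f β ▸ Finset.mem_image_of_mem f h)
  not_neg_mem := by
    rintro _ hα hneg
    obtain ⟨β, hβ, rfl⟩ := Finset.mem_image.mp hα
    obtain ⟨γ, hγ, hγβ⟩ := Finset.mem_image.mp hneg
    rw [← map_neg, EquivLike.apply_eq_iff_eq] at hγβ
    exact hP.not_neg_mem β hβ (hγβ ▸ hγ)

lemma neg_mem_sdiff [DecidableEq V] (hP : IsPositiveSystem Δ P) (hQ : IsPositiveSystem Δ Q)
    {β : V} (hβ : β ∈ Q \ P) : -β ∈ P \ Q := by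
  obtain ⟨hβQ, hβP⟩ := Finset.mem_sdiff.mp hβ
  refine Finset.mem_sdiff.mpr ⟨?_, hQ.not_neg_mem β hβQ⟩
  exact (hP.mem_or_neg_mem β (hQ.subset hβQ)).resolve_left hβP

lemma sum_sdiff_eq_neg [DecidableEq V] (hP : IsPositiveSystem Δ P)
    (hQ : IsPositiveSystem Δ Q) : ∑ β ∈ Q \ P, β = -∑ β ∈ P \ Q, β := by
  rw [← Finset.sum_neg_distrib]
  exact Finset.sum_nbij' (fun β => -β) (fun β => -β) (fun _ => hP.neg_mem_sdiff hQ)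
    (fun _ => hQ.neg_mem_sdiff hP) (by simp) (by simp) (by simp)

end IsPositiveSystem

end

lemma inner_eq_inner_of_norm_sub_eq {x y : V} (l : V) (hxy : ‖x‖ = ‖y‖)
    (h : ‖l - x‖ = ‖l - y‖) : ⟪l, x⟫ = ⟪l, y⟫ := by
  have hsq : ‖l - x‖ ^ 2 = ‖l - y‖ ^ 2 := by rw [h]
  rw [norm_sub_sq_real, norm_sub_sq_real, hxy] at hsq
  linarith

lemma IsRootSystem.apply_mem_iff {Δ : Finset V} (hΔ : IsRootSystem Δ) {w : V ≃ₗᵢ[ℝ] V}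
    (hw : w ∈ weylGroup Δ) (β : V) : w β ∈ Δ ↔ β ∈ Δ := by
  induction hw using Subgroup.closure_induction generalizing β with
  | mem r hr =>
    obtain ⟨α, hα, rfl⟩ := hr
    refine ⟨fun h => ?_, hΔ.reflect_mem α hα β⟩
    simpa [rootReflection] using hΔ.reflect_mem α hα _ h
  | one => rfl
  | mul x y _ _ hx hy => exact (hx (y β)).trans (hy β)
  | inv x _ hx => simpa using (hx (x⁻¹ β)).symm

lemma halfSum_image [DecidableEq V] {F : Type*} [FunLike F V V] [LinearMapClass F ℝ V V]
    {f : F} (hf : Function.Injective f) (P : Finset V) :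
    halfSum (P.image f) = f (halfSum P) := by
  rw [halfSum, halfSum, map_smul, map_sum, Finset.sum_image fun a _ b _ h => hf h]

lemma IsDominant.inner_eq_zero_of_inner_sum_eq_zero {l : V} {P S : Finset V}
    (hl : IsDominant l P) (hSP : S ⊆ P) (h : ⟪l, ∑ β ∈ S, β⟫ = 0) :
    ∀ β ∈ S, ⟪l, β⟫ = 0 := by
  rw [inner_sum] at h
  exact (Finset.sum_eq_zero_iff_of_nonneg fun β hβ => hl β (hSP hβ)).mp h

namespace IsPositiveSystem

variable {Δ P Q : Finset V}

lemma halfSum_sub_halfSum [DecidableEq V] (hP : IsPositiveSystem Δ P)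
    (hQ : IsPositiveSystem Δ Q) : halfSum P - halfSum Q = ∑ β ∈ P \ Q, β := by
  rw [halfSum, halfSum, ← smul_sub, ← Finset.sum_sdiff_sub_sum_sdiff, hP.sum_sdiff_eq_neg hQ,
    sub_neg_eq_add, ← two_smul ℝ, smul_smul, inv_mul_cancel₀ two_ne_zero, one_smul]

lemma inner_eq_zero_of_mem_sdiff [DecidableEq V] (hP : IsPositiveSystem Δ P)
    (hQ : IsPositiveSystem Δ Q) {l : V} (hl : IsDominant l P)
    (h : ⟪l, halfSum P⟫ = ⟪l, halfSum Q⟫) : ∀ β ∈ P \ Q, ⟪l, β⟫ = 0 := by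
  refine hl.inner_eq_zero_of_inner_sum_eq_zero Finset.sdiff_subset ?_
  rw [← hP.halfSum_sub_halfSum hQ, inner_sub_right, h, sub_self]

lemma isDominant_of_inner_sdiff_eq_zero [DecidableEq V] (hP : IsPositiveSystem Δ P)
    (hQ : IsPositiveSystem Δ Q) {l : V} (hl : IsDominant l P)
    (h : ∀ β ∈ P \ Q, ⟪l, β⟫ = 0) : IsDominant l Q := by
  intro α hα
  by_cases hαP : α ∈ P
  · exact hl α hαP
  · have := h (-α) (hP.neg_mem_sdiff hQ (Finset.mem_sdiff.mpr ⟨hα, hαP⟩))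
    rw [inner_neg_right] at this
    linarith

end IsPositiveSystem

end

theorem stmt7 [DecidableEq V] (Δ P : Finset V) (hΔ : IsRootSystem Δ) (hP : IsPositiveSystem Δ P)
    (l : V) (hl : IsDominant l P) (w : V ≃ₗᵢ[ℝ] V) (hw : w ∈ weylGroup Δ)
    (heq : ‖l - halfSum P‖ = ‖l - w (halfSum P)‖) :
    (∀ γ ∈ (P.image (fun a => -a)) ∩ (P.image w), ⟪l, γ⟫ = 0) ∧
      IsDominant l (P.image w) := by
  have hQ : IsPositiveSystem Δ (P.image w) := hP.image (hΔ.apply_mem_iff hw)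
  have hρ : w (halfSum P) = halfSum (P.image w) := (halfSum_image w.injective P).symm
  have hinner : ⟪l, halfSum P⟫ = ⟪l, halfSum (P.image w)⟫ :=
    inner_eq_inner_of_norm_sub_eq l (by rw [← hρ, w.norm_map]) (hρ ▸ heq)
  have hzero := hP.inner_eq_zero_of_mem_sdiff hQ hl hinner
  refine ⟨fun γ hγ => ?_, hP.isDominant_of_inner_sdiff_eq_zero hQ hl hzero⟩
  obtain ⟨hγP, hγQ⟩ := Finset.mem_inter.mp hγ
  obtain ⟨β, hβ, rfl⟩ := Finset.mem_image.mp hγP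
  have hβQ : β ∉ P.image w := fun h => hQ.not_neg_mem β h hγQ
  rw [inner_neg_right, hzero β (Finset.mem_sdiff.mpr ⟨hβ, hβQ⟩), neg_zero]
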